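/- Let c be an odd positive integer and let a be an integer coprime to c. Define G(a,c) = ∑_{x=0}^{c−1} exp(2πi·a·x²/c) ∈ ℂ. Then G(a,c) = J(a|c) · G(1,c), where J(a|c) denotes the Jacobi symbol of a modulo c. -/

import Mathlib

open Finset

/-- The quadratic Gauss sum `G(a,c) = ∑_{x=0}^{c−1} exp(2πi·a·x²/c)`. -/
noncomputable def gaussSum2 (a : ℤ) (c : ℕ) : ℂ :=
  ∑ x ∈ Finset.range c,
    Complex.exp (2 * Real.pi * Complex.I * a * (x : ℂ) ^ 2 / c)

/-!
For coprime `m, n` the Chinese remainder theorem splits `G(a, mn)` as `G(an, m) · G(am, n)`,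
matching `J(a | mn) = J(a | m) J(a | n)` and `J(an | m) = J(a | m) J(n | m)`; so it suffices to
treat odd prime powers. Shifting the summation variable by multiples of `pL` shows that only the
multiples of `p` contribute to `G(a, p²L)`, whence `G(a, p²L) = p · G(a, L)`, which mirrors
`J(a | p²) = 1`. For a prime `p`, counting square roots with the quadratic character `χ` turns
`G(a, p)` into the Gauss sum of `χ` against `x ↦ e(ax/p)`, and substituting `x ↦ a⁻¹x` in it
produces the factor `χ(a) = J(a | p)`.
-/

open ZMod (stdAddChar)

section FiniteField

variable {F : Type*} [Field F] [Fintype F] [DecidableEq F] {ψ : AddChar F ℂ}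

lemma sum_addChar_mul_sq_eq_gaussSum (hF : ringChar F ≠ 2) (hψ : ψ.IsPrimitive)
    {a : F} (ha : a ≠ 0) :
    ∑ x, ψ (a * x ^ 2) =
      gaussSum ((quadraticChar F).ringHomComp (Int.castRingHom ℂ)) (ψ.mulShift a) := by
  have hcard (t : F) : (#{x | x ^ 2 = t} : ℂ) = quadraticChar F t + 1 := by
    have := quadraticChar_card_sqrts hF t
    rw [Set.toFinset_ofPred] at this
    exact_mod_cast this
  have hsum : ∑ t, ψ (a * t) = 0 := by
    simpa [mul_comm, ha] using AddChar.sum_mulShift a hψ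
  rw [← sum_fiberwise' univ (· ^ 2) (fun t => ψ (a * t))]
  simp only [sum_const, nsmul_eq_mul, hcard, add_mul, one_mul, sum_add_distrib, hsum, add_zero]
  rfl

lemma sum_addChar_mul_sq (hF : ringChar F ≠ 2) (hψ : ψ.IsPrimitive) {a : F} (ha : a ≠ 0) :
    ∑ x, ψ (a * x ^ 2) = quadraticChar F a * ∑ x, ψ (x ^ 2) := by
  have h1 := sum_addChar_mul_sq_eq_gaussSum hF hψ one_ne_zero
  simp only [one_mul, AddChar.mulShift_one] at h1
  rw [sum_addChar_mul_sq_eq_gaussSum hF hψ ha, h1, ← Units.val_mk0 ha, gaussSum_mulShift_eq,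
    ((quadraticChar_isQuadratic F).comp _).inv]
  rfl

end FiniteField

lemma Finset.sum_range_mul_eq_sum_sum {M : Type*} [AddCommMonoid M] (m n : ℕ) (f : ℕ → M) :
    ∑ x ∈ range (m * n), f x = ∑ i ∈ range m, ∑ j ∈ range n, f (j + n * i) := by
  simp only [← Fin.sum_univ_eq_sum_range]
  rw [← Fintype.sum_prod_type', ← finProdFinEquiv.sum_comp]
  rfl

namespace ZMod

lemma sum_range_natCast {M : Type*} [AddCommMonoid M] (N : ℕ) [NeZero N] (f : ZMod N → M) :
    ∑ x ∈ range N, f x = ∑ x : ZMod N, f x := by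
  obtain ⟨n, rfl⟩ : ∃ n, N = n + 1 := Nat.exists_eq_succ_of_ne_zero (NeZero.ne N)
  rw [← Fin.sum_univ_eq_sum_range (fun x => f x)]
  exact Fintype.sum_congr _ _ fun i => congrArg f (Fin.cast_val_eq_self i)

lemma sum_range_stdAddChar_mul (N : ℕ) [NeZero N] (b : ZMod N) :
    ∑ z ∈ range N, stdAddChar (b * (z : ZMod N)) = if b = 0 then (N : ℂ) else 0 := by
  rw [sum_range_natCast N (fun z => stdAddChar (b * z))]
  simpa [mul_comm] using AddChar.sum_mulShift b (isPrimitive_stdAddChar N)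

lemma stdAddChar_natCast_mul_intCast {M N d : ℕ} [NeZero M] [NeZero N] (h : M = N * d) (k : ℤ) :
    stdAddChar ((d : ZMod M) * (k : ZMod M)) = stdAddChar (k : ZMod N) := by
  have hd : (d : ℂ) ≠ 0 := Nat.cast_ne_zero.mpr (right_ne_zero_of_mul (h ▸ NeZero.ne M))
  rw [← Int.cast_natCast, ← Int.cast_mul, stdAddChar_coe, stdAddChar_coe, h]
  push_cast
  rw [mul_comm (d : ℂ), ← mul_assoc, mul_div_mul_right _ _ hd]

lemma natCast_mul_val_add_injective {m n : ℕ} [NeZero m] [NeZero n] (hmn : m.Coprime n) :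
    Function.Injective
      fun p : ZMod m × ZMod n => ((n * p.1.val + m * p.2.val : ℕ) : ZMod (m * n)) := by
  rintro ⟨u, v⟩ ⟨u', v'⟩ h
  have hu := congrArg (castHom (dvd_mul_right m n) (ZMod m)) h
  have hv := congrArg (castHom (dvd_mul_left n m) (ZMod n)) h
  simp only [map_natCast] at hu hv
  push_cast [natCast_self, natCast_zmod_val] at hu hv
  simp only [zero_mul, add_zero, zero_add] at hu hv
  rw [Prod.mk.injEq]
  exact ⟨(unitOfCoprime n hmn.symm).isUnit.mul_left_cancel hu,
    (unitOfCoprime m hmn).isUnit.mul_left_cancel hv⟩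

end ZMod

lemma gaussSum2_eq_sum_range (a : ℤ) (N : ℕ) [NeZero N] :
    gaussSum2 a N = ∑ x ∈ range N, stdAddChar ((a : ZMod N) * (x : ZMod N) ^ 2) := by
  refine sum_congr rfl fun x _ => ?_
  rw [show (a : ZMod N) * (x : ZMod N) ^ 2 = ((a * x ^ 2 : ℤ) : ZMod N) by push_cast; rfl,
    ZMod.stdAddChar_coe]
  push_cast
  ring_nf

lemma gaussSum2_eq_sum_zmod (a : ℤ) (N : ℕ) [NeZero N] :
    gaussSum2 a N = ∑ x : ZMod N, stdAddChar ((a : ZMod N) * x ^ 2) := by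
  rw [gaussSum2_eq_sum_range, ZMod.sum_range_natCast N fun x => stdAddChar ((a : ZMod N) * x ^ 2)]

lemma gaussSum2_mul {m n : ℕ} [NeZero m] [NeZero n] (hmn : m.Coprime n) (a : ℤ) :
    gaussSum2 a (m * n) = gaussSum2 (a * n) m * gaussSum2 (a * m) n := by
  have hbij := (Fintype.bijective_iff_injective_and_card _).mpr
    ⟨ZMod.natCast_mul_val_add_injective hmn, by simp [ZMod.card]⟩
  rw [gaussSum2_eq_sum_zmod, gaussSum2_eq_sum_zmod, gaussSum2_eq_sum_zmod, sum_mul_sum,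
    ← Fintype.sum_prod_type']
  refine (Fintype.sum_bijective _ hbij _ _ fun ⟨u, v⟩ => ?_).symm
  have hsplit : (a : ZMod (m * n)) * ((n * u.val + m * v.val : ℕ) : ZMod (m * n)) ^ 2 =
      n * ((a * n * u.val ^ 2 : ℤ) : ZMod (m * n)) + m * ((a * m * v.val ^ 2 : ℤ) : ZMod (m * n))
        + ((m * n : ℕ) : ZMod (m * n)) * (2 * a * u.val * v.val) := by
    push_cast; ring
  rw [hsplit, ZMod.natCast_self, zero_mul, add_zero, AddChar.map_add_eq_mul,
    ZMod.stdAddChar_natCast_mul_intCast rfl, ZMod.stdAddChar_natCast_mul_intCast (mul_comm m n)]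
  push_cast [ZMod.natCast_zmod_val]
  ring_nf

lemma gaussSum2_sq_mul {q L : ℕ} [NeZero q] [NeZero L] {a : ℤ} (ha : IsCoprime (2 * a) q) :
    gaussSum2 a (q ^ 2 * L) = q * gaussSum2 a L := by
  set N := q ^ 2 * L
  -- `(qL)²` is a multiple of `N`, so a shift by `qL · i` only twists the summand by a character.
  have hshift (i j : ℕ) : stdAddChar ((a : ZMod N) * ((j + q * L * i : ℕ) : ZMod N) ^ 2) =
      stdAddChar ((a : ZMod N) * (j : ZMod N) ^ 2) *
        stdAddChar (((2 * a * j : ℤ) : ZMod q) * (i : ZMod q)) := by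
    rw [show (a : ZMod N) * ((j + q * L * i : ℕ) : ZMod N) ^ 2 = a * (j : ZMod N) ^ 2 +
        ((q * L : ℕ) : ZMod N) * ((2 * a * j * i : ℤ) : ZMod N) + (N : ZMod N) * (a * L * i ^ 2)
        by push_cast [N]; ring,
      ZMod.natCast_self, zero_mul, add_zero, AddChar.map_add_eq_mul,
      ZMod.stdAddChar_natCast_mul_intCast (by ring)]
    push_cast; rfl
  have htwist_eq_zero (r w : ℕ) (hr : r < q) :
      ((2 * a * (r + q * w : ℕ) : ℤ) : ZMod q) = 0 ↔ r = 0 := by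
    have hdvd : (q : ℤ) ∣ 2 * a * (r + q * w : ℕ) ↔ q ∣ r + q * w :=
      ⟨fun h => Int.natCast_dvd_natCast.mp (ha.symm.dvd_of_dvd_mul_left h),
        fun h => (Int.natCast_dvd_natCast.mpr h).mul_left _⟩
    rw [ZMod.intCast_zmod_eq_zero_iff_dvd, hdvd, Nat.dvd_add_left (dvd_mul_right q w)]
    exact ⟨fun h => Nat.eq_zero_of_dvd_of_lt h hr, fun h => h ▸ dvd_zero q⟩
  have hmultiple (w : ℕ) : stdAddChar ((a : ZMod N) * ((0 + q * w : ℕ) : ZMod N) ^ 2) =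
      stdAddChar ((a : ZMod L) * (w : ZMod L) ^ 2) := by
    rw [show (a : ZMod N) * ((0 + q * w : ℕ) : ZMod N) ^ 2 =
        ((q ^ 2 : ℕ) : ZMod N) * ((a * w ^ 2 : ℤ) : ZMod N) by push_cast; ring,
      ZMod.stdAddChar_natCast_mul_intCast (mul_comm _ _)]
    push_cast; rfl
  rw [gaussSum2_eq_sum_range, gaussSum2_eq_sum_range,
    show range N = range (q * (q * L)) from congrArg range (by ring), sum_range_mul_eq_sum_sum]
  simp_rw [hshift]
  rw [sum_comm]
  simp_rw [← mul_sum, ZMod.sum_range_stdAddChar_mul]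
  rw [show range (q * L) = range (L * q) from congrArg range (mul_comm q L),
    sum_range_mul_eq_sum_sum, mul_sum]
  refine sum_congr rfl fun w _ => ?_
  rw [sum_eq_single_of_mem 0 (mem_range.mpr (NeZero.pos q)) fun r hr hr0 => by
      rw [if_neg (by rwa [htwist_eq_zero r w (mem_range.mp hr)]), mul_zero],
    if_pos ((htwist_eq_zero 0 w (NeZero.pos q)).mpr rfl), hmultiple, mul_comm]

lemma gaussSum2_prime {p : ℕ} [Fact p.Prime] (hp : p ≠ 2) {a : ℤ} (ha : (a : ZMod p) ≠ 0) :
    gaussSum2 a p = legendreSym p a * gaussSum2 1 p := by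
  rw [gaussSum2_eq_sum_zmod, gaussSum2_eq_sum_zmod,
    sum_addChar_mul_sq (by rwa [ZMod.ringChar_zmod_n]) (ZMod.isPrimitive_stdAddChar p) ha]
  simp [legendreSym]

lemma gaussSum2_prime_pow {p : ℕ} [hp : Fact p.Prime] (hp2 : p ≠ 2) {a : ℤ} (ha : IsCoprime a p)
    (k : ℕ) : gaussSum2 a (p ^ k) = jacobiSym a (p ^ k) * gaussSum2 1 (p ^ k) := by
  have h2p : IsCoprime (2 : ℤ) p :=
    Nat.isCoprime_iff_coprime.mpr ((Nat.coprime_primes Nat.prime_two hp.out).mpr hp2.symm)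
  induction k using Nat.twoStepInduction with
  | zero => simp [gaussSum2]
  | one =>
    have ha' : (a : ZMod p) ≠ 0 := by
      rw [Ne, ZMod.intCast_zmod_eq_zero_iff_dvd]
      exact fun h => (Nat.prime_iff_prime_int.mp hp.out).not_isUnit (ha.isUnit_of_dvd' h dvd_rfl)
    rw [pow_one, gaussSum2_prime hp2 ha', jacobiSym.legendreSym.to_jacobiSym]
  | more k ih _ =>
    rw [pow_add, mul_comm, gaussSum2_sq_mul (h2p.mul_left ha),
      gaussSum2_sq_mul (h2p.mul_left isCoprime_one_left), ih, jacobiSym.mul_right,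
      jacobiSym.pow_right a p 2, jacobiSym.sq_one (Int.isCoprime_iff_gcd_eq_one.mp ha)]
    push_cast; ring

lemma gaussSum2_eq_jacobiSym_mul_of_coprime {m n : ℕ} [NeZero m] [NeZero n] (hmn : m.Coprime n)
    (hm : ∀ a : ℤ, IsCoprime a m → gaussSum2 a m = jacobiSym a m * gaussSum2 1 m)
    (hn : ∀ a : ℤ, IsCoprime a n → gaussSum2 a n = jacobiSym a n * gaussSum2 1 n)
    {a : ℤ} (ha : IsCoprime a (m * n : ℕ)) :
    gaussSum2 a (m * n) = jacobiSym a (m * n) * gaussSum2 1 (m * n) := by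
  have hmn' : IsCoprime (m : ℤ) n := Nat.isCoprime_iff_coprime.mpr hmn
  push_cast at ha
  rw [gaussSum2_mul hmn, gaussSum2_mul hmn, one_mul, one_mul,
    hm _ (ha.of_mul_right_left.mul_left hmn'.symm), hn _ (ha.of_mul_right_right.mul_left hmn'),
    hm _ hmn'.symm, hn _ hmn', jacobiSym.mul_right, jacobiSym.mul_left, jacobiSym.mul_left]
  push_cast; ring

theorem gauss_sum_numerator_variation_general (c : ℕ) (hc : Odd c)
    (a : ℤ) (hac : IsCoprime a (c : ℤ)) :
    gaussSum2 a c = (jacobiSym a c : ℂ) * gaussSum2 1 c := by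
  induction c using Nat.recOnPosPrimePosCoprime generalizing a with
  | prime_pow p k hp hk =>
    have : Fact p.Prime := ⟨hp⟩
    have hp2 : p ≠ 2 := by
      rintro rfl
      exact Nat.not_even_iff_odd.mpr hc ((Nat.even_pow' hk.ne').mpr even_two)
    push_cast at hac
    exact gaussSum2_prime_pow hp2 (hac.of_isCoprime_of_dvd_right (dvd_pow_self _ hk.ne')) k
  | zero => exact absurd hc Nat.not_odd_zero
  | one => simp [gaussSum2]
  | coprime m n hm hn hmn ihm ihn =>
    have : NeZero m := ⟨by omega⟩
    have : NeZero n := ⟨by omega⟩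
    exact gaussSum2_eq_jacobiSym_mul_of_coprime hmn
      (ihm (Nat.Odd.of_mul_left hc)) (ihn (Nat.Odd.of_mul_right hc)) hac

/-- Variation of the quadratic Gauss sum in the numerator:
for odd `c > 0` and `a` coprime to `c`, `G(a,c) = J(a|c)·G(1,c)`, where
`J(a|c)` is the Jacobi symbol. -/
theorem gauss_sum_numerator_variation (c : ℕ) (hc : Odd c) (hpos : 0 < c)
    (a : ℤ) (hac : IsCoprime a (c : ℤ)) :
    gaussSum2 a c = (jacobiSym a c : ℂ) * gaussSum2 1 c :=
  gauss_sum_numerator_variation_general c hc a hac
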